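/- arXiv:2601.02266 — 2 statements merged into one kernel-verified Lean document; each statement's English description precedes it below -/
import Mathlib

section
/- For every n ≥ 3 there exist a constant C ≥ 1, a continuum X ⊆ Sⁿ, and two disjoint nonempty open connected sets M_1, M_2 ⊆ Sⁿ such that Sⁿ \ X = M_1 ∪ M_2, the frontier of M_1 in Sⁿ and the frontier of M_2 in Sⁿ both equal X, each M_i is homeomorphic to the open unit ball of ℝⁿ, and each M_i is a C-John domain in Sⁿ. -/
open Set Metric

/-- A set `D` in a metric space `E` is a `C`-John domain if it is open, connected,
not all of `E`, and any two points of `D` can be joined by a rectifiable curve in `D`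
satisfying the John length-distance condition. -/
def IsJohnDomain {E : Type*} [MetricSpace E] (C : ℝ) (D : Set E) : Prop :=
  IsOpen D ∧ IsConnected D ∧ D ≠ univ ∧
    ∀ a ∈ D, ∀ b ∈ D, ∃ γ : ℝ → E,
      ContinuousOn γ (Icc 0 1) ∧ γ 0 = a ∧ γ 1 = b ∧
      MapsTo γ (Icc 0 1) D ∧
      eVariationOn γ (Icc 0 1) ≠ ⊤ ∧
      ∀ t ∈ Icc (0 : ℝ) 1,
        min (eVariationOn γ (Icc 0 t)) (eVariationOn γ (Icc t 1)) ≤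
          ENNReal.ofReal (C * infDist (γ t) Dᶜ)

namespace CB
open Real
variable {n : ℕ}

noncomputable def mk {m : ℕ} (f : Fin m → ℝ) : EuclideanSpace ℝ (Fin m) := (WithLp.equiv 2 _).symm f

@[simp] lemma mk_apply {m : ℕ} (f : Fin m → ℝ) (i : Fin m) : mk f i = f i := rfl

lemma mk_injective {m : ℕ} : Function.Injective (mk (m := m)) :=
  (WithLp.equiv 2 _).symm.injective

lemma continuous_mk {m : ℕ} : Continuous (mk (m := m)) := PiLp.continuous_toLp _ _

lemma continuous_coord {m : ℕ} (i : Fin m) :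
    Continuous (fun x : EuclideanSpace ℝ (Fin m) => x i) :=
  (EuclideanSpace.proj i).continuous

lemma normsq {m : ℕ} (x : EuclideanSpace ℝ (Fin m)) : ‖x‖ ^ 2 = ∑ i, x i ^ 2 := by
  rw [EuclideanSpace.norm_eq, Real.sq_sqrt (by positivity)]
  simp [sq_abs]

lemma distsq {m : ℕ} (x y : EuclideanSpace ℝ (Fin m)) :
    dist x y ^ 2 = ∑ i, (x i - y i) ^ 2 := by
  rw [EuclideanSpace.dist_eq, Real.sq_sqrt (by positivity)]
  simp [Real.dist_eq, sq_abs]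

lemma norm_eq_one_of_sq {m : ℕ} {x : EuclideanSpace ℝ (Fin m)} (h : ∑ i, x i ^ 2 = 1) :
    ‖x‖ = 1 := by
  have h2 : ‖x‖ ^ 2 = 1 := by rw [normsq]; exact h
  nlinarith [norm_nonneg x]

lemma coord_abs_le_norm {m : ℕ} (x : EuclideanSpace ℝ (Fin m)) (i : Fin m) :
    |x i| ≤ ‖x‖ := by
  have h1 : x i ^ 2 ≤ ‖x‖ ^ 2 := by
    rw [normsq]
    exact Finset.single_le_sum (f := fun j => x j ^ 2) (fun j _ => sq_nonneg _)
      (Finset.mem_univ i)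
  calc |x i| = Real.sqrt (x i ^ 2) := (Real.sqrt_sq_eq_abs _).symm
    _ ≤ Real.sqrt (‖x‖ ^ 2) := Real.sqrt_le_sqrt h1
    _ = ‖x‖ := Real.sqrt_sq (norm_nonneg _)

lemma coord_abs_le_dist {m : ℕ} (x y : EuclideanSpace ℝ (Fin m)) (i : Fin m) :
    |x i - y i| ≤ dist x y := by
  have := coord_abs_le_norm (x - y) i
  simpa [dist_eq_norm] using this

/-! ### geodesics towards the pole -/

noncomputable def pole (n : ℕ) (σ : ℝ) : EuclideanSpace ℝ (Fin (n + 1)) :=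
  mk (Fin.snoc 0 σ)

@[simp] lemma pole_last (σ : ℝ) : pole n σ (Fin.last n) = σ := by
  simp [pole]

@[simp] lemma pole_castSucc (σ : ℝ) (i : Fin n) : pole n σ (i.castSucc) = 0 := by
  simp [pole]

lemma pole_norm {σ : ℝ} (hσ : σ = 1 ∨ σ = -1) : ‖pole n σ‖ = 1 := by
  apply norm_eq_one_of_sq
  rw [Fin.sum_univ_castSucc]
  rcases hσ with h | h <;> simp [h]

noncomputable def ang (σ : ℝ) (a : EuclideanSpace ℝ (Fin (n + 1))) : ℝ :=
  arccos (σ * a (Fin.last n))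

noncomputable def geo (σ : ℝ) (a : EuclideanSpace ℝ (Fin (n + 1))) (s : ℝ) :
    EuclideanSpace ℝ (Fin (n + 1)) :=
  mk (Fin.snoc (fun i => (sin (s * ang σ a) / sin (ang σ a)) * a i.castSucc)
    (σ * cos (s * ang σ a)))

@[simp] lemma geo_last (σ : ℝ) (a : EuclideanSpace ℝ (Fin (n + 1))) (s : ℝ) :
    geo σ a s (Fin.last n) = σ * cos (s * ang σ a) := by simp [geo]

@[simp] lemma geo_castSucc (σ : ℝ) (a : EuclideanSpace ℝ (Fin (n + 1))) (s : ℝ) (i : Fin n) :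
    geo σ a s (i.castSucc) = (sin (s * ang σ a) / sin (ang σ a)) * a i.castSucc := by
  simp [geo]

section Geo

variable {σ : ℝ} {a : EuclideanSpace ℝ (Fin (n + 1))}

lemma sq_one (hσ : σ = 1 ∨ σ = -1) : σ ^ 2 = 1 := by rcases hσ with h | h <;> simp [h]

lemma sum_castSucc_sq (ha : ‖a‖ = 1) :
    ∑ i : Fin n, a i.castSucc ^ 2 = 1 - a (Fin.last n) ^ 2 := by
  have h := normsq a
  rw [Fin.sum_univ_castSucc, ha] at h
  nlinarith [h]

lemma abs_mul_last_le (hσ : σ = 1 ∨ σ = -1) (ha : ‖a‖ = 1) :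
    |σ * a (Fin.last n)| ≤ 1 := by
  have h1 : |a (Fin.last n)| ≤ 1 := ha ▸ coord_abs_le_norm a (Fin.last n)
  rcases hσ with h | h <;> simp [h, abs_mul] <;> simpa using h1

lemma cos_ang (hσ : σ = 1 ∨ σ = -1) (ha : ‖a‖ = 1) :
    cos (ang σ a) = σ * a (Fin.last n) := by
  have := abs_mul_last_le hσ ha
  rw [abs_le] at this
  exact Real.cos_arccos this.1 this.2

lemma ang_nonneg : 0 ≤ ang σ a := Real.arccos_nonneg _

lemma ang_le_pi : ang σ a ≤ π := Real.arccos_le_pi _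

lemma ang_lt_pi_div_two (hpos : 0 < σ * a (Fin.last n)) : ang σ a < π / 2 :=
  Real.arccos_lt_pi_div_two.2 hpos

lemma sin_ang_sq (hσ : σ = 1 ∨ σ = -1) (ha : ‖a‖ = 1) :
    sin (ang σ a) ^ 2 = 1 - a (Fin.last n) ^ 2 := by
  have h1 : sin (ang σ a) ^ 2 = 1 - cos (ang σ a) ^ 2 := by
    have := Real.sin_sq_add_cos_sq (ang σ a); linarith
  rw [h1, cos_ang hσ ha, mul_pow, sq_one hσ, one_mul]

lemma ang_eq_zero_of_sin_eq_zero (hpos : 0 < σ * a (Fin.last n))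
    (h0 : sin (ang σ a) = 0) : ang σ a = 0 := by
  have h2 := ang_lt_pi_div_two hpos
  have h3 := ang_nonneg (σ := σ) (a := a)
  have hπ := Real.pi_pos
  exact (Real.sin_eq_zero_iff_of_lt_of_lt (by linarith) (by linarith)).mp h0

lemma geo_norm (hσ : σ = 1 ∨ σ = -1) (ha : ‖a‖ = 1)
    (hpos : 0 < σ * a (Fin.last n)) (s : ℝ) : ‖geo σ a s‖ = 1 := by
  apply norm_eq_one_of_sq
  rw [Fin.sum_univ_castSucc]
  simp only [geo_castSucc, geo_last]
  have e1 : ∀ i : Fin n, ((sin (s * ang σ a) / sin (ang σ a)) * a i.castSucc) ^ 2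
      = (sin (s * ang σ a) / sin (ang σ a)) ^ 2 * a i.castSucc ^ 2 := fun i => by ring
  simp_rw [e1]
  rw [← Finset.mul_sum, sum_castSucc_sq ha, ← sin_ang_sq hσ ha]
  rcases eq_or_ne (sin (ang σ a)) 0 with h0 | h0
  · have hang : ang σ a = 0 := ang_eq_zero_of_sin_eq_zero hpos h0
    rw [hang] at h0 ⊢
    simp [h0, mul_pow, sq_one hσ]
  · rw [div_pow, div_mul_cancel₀ _ (by positivity)]
    have := Real.sin_sq_add_cos_sq (s * ang σ a)
    have hs := sq_one hσ
    nlinarith [this]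

lemma geo_zero (hσ : σ = 1 ∨ σ = -1) : geo σ a 0 = pole n σ := by
  apply PiLp.ext
  intro i
  refine Fin.lastCases ?_ (fun j => ?_) i
  · show geo σ a 0 (Fin.last n) = pole n σ (Fin.last n)
    simp
  · show geo σ a 0 (j.castSucc) = pole n σ (j.castSucc)
    simp

lemma geo_one (hσ : σ = 1 ∨ σ = -1) (ha : ‖a‖ = 1) (hpos : 0 < σ * a (Fin.last n)) :
    geo σ a 1 = a := by
  apply PiLp.ext
  intro i
  refine Fin.lastCases ?_ (fun j => ?_) i
  · show geo σ a 1 (Fin.last n) = a (Fin.last n)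
    rw [geo_last, one_mul, cos_ang hσ ha]
    have hs2 := sq_one hσ
    linear_combination a (Fin.last n) * hs2
  · show geo σ a 1 (j.castSucc) = a (j.castSucc)
    rw [geo_castSucc, one_mul]
    rcases eq_or_ne (sin (ang σ a)) 0 with h0 | h0
    · have hsq := sin_ang_sq hσ ha
      rw [h0] at hsq
      have hsum : ∑ i : Fin n, a i.castSucc ^ 2 = 0 := by
        rw [sum_castSucc_sq ha]; nlinarith
      have hz : a (j.castSucc) = 0 := by
        have := Finset.sum_eq_zero_iff_of_nonneg
          (fun i (_ : i ∈ Finset.univ) => sq_nonneg (a i.castSucc)) |>.mp hsum j (Finset.mem_univ j)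
        nlinarith [this]
      rw [hz, h0]
      simp
    · rw [div_self h0, one_mul]

lemma two_sub_cos (A B : ℝ) :
    (sin A - sin B) ^ 2 + (cos A - cos B) ^ 2 = 2 - 2 * cos (A - B) := by
  rw [Real.cos_sub]
  have hA := Real.sin_sq_add_cos_sq A
  have hB := Real.sin_sq_add_cos_sq B
  nlinarith [hA, hB]

lemma geo_dist (hσ : σ = 1 ∨ σ = -1) (ha : ‖a‖ = 1)
    (hpos : 0 < σ * a (Fin.last n)) (s t : ℝ) :
    dist (geo σ a s) (geo σ a t) ≤ ang σ a * |s - t| := by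
  set φ := ang σ a with hφ
  rcases eq_or_ne (sin φ) 0 with h0 | h0
  · have hang : φ = 0 := ang_eq_zero_of_sin_eq_zero hpos h0
    have heq : geo σ a s = geo σ a t := by
      apply PiLp.ext
      intro i
      refine Fin.lastCases ?_ (fun j => ?_) i
      · show geo σ a s (Fin.last n) = geo σ a t (Fin.last n)
        rw [geo_last, geo_last, ← hφ, hang]
        simp
      · show geo σ a s (j.castSucc) = geo σ a t (j.castSucc)
        rw [geo_castSucc, geo_castSucc, ← hφ, hang]
        simp
    rw [heq, dist_self]
    positivity
  have hd : dist (geo σ a s) (geo σ a t) ^ 2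
      = ((sin (s * φ) - sin (t * φ)) / sin φ) ^ 2 * (sin φ ^ 2)
        + (cos (s * φ) - cos (t * φ)) ^ 2 := by
    rw [distsq, Fin.sum_univ_castSucc]
    simp only [geo_castSucc, geo_last]
    have e1 : ∀ i : Fin n, ((sin (s * φ) / sin φ) * a i.castSucc
        - (sin (t * φ) / sin φ) * a i.castSucc) ^ 2
        = ((sin (s * φ) - sin (t * φ)) / sin φ) ^ 2 * a i.castSucc ^ 2 := fun i => by ring
    simp_rw [← hφ, e1]
    rw [← Finset.mul_sum, sum_castSucc_sq ha, ← sin_ang_sq hσ ha]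
    have hs := sq_one hσ
    nlinarith [hs]
  have hbound : dist (geo σ a s) (geo σ a t) ^ 2 ≤ (φ * |s - t|) ^ 2 := by
    · rw [hd, div_pow, div_mul_cancel₀ _ (by positivity)]
      have h2 := two_sub_cos (s * φ) (t * φ)
      have h3 : s * φ - t * φ = (s - t) * φ := by ring
      rw [h3] at h2
      have h4 := Real.one_sub_sq_div_two_le_cos (x := (s - t) * φ)
      have h5 : (φ * |s - t|) ^ 2 = ((s - t) * φ) ^ 2 := by
        rw [mul_pow, mul_pow, sq_abs]; ring
      nlinarith [h2, h4]
  have h6 : 0 ≤ φ * |s - t| := mul_nonneg ang_nonneg (abs_nonneg _)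
  nlinarith [dist_nonneg (x := geo σ a s) (y := geo σ a t), hbound, h6]

end Geo
/-! ### the sphere, the equator, and the hemispheres -/

abbrev Sph (n : ℕ) := ↥(sphere (0 : EuclideanSpace ℝ (Fin (n + 1))) 1)

def Mset (n : ℕ) (σ : ℝ) : Set (Sph n) :=
  {x | 0 < σ * (x : EuclideanSpace ℝ (Fin (n + 1))) (Fin.last n)}

def Xset (n : ℕ) : Set (Sph n) :=
  {x | (x : EuclideanSpace ℝ (Fin (n + 1))) (Fin.last n) = 0}

noncomputable def poleS (n : ℕ) {σ : ℝ} (hσ : σ = 1 ∨ σ = -1) : Sph n :=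
  ⟨pole n σ, by rw [mem_sphere_zero_iff_norm]; exact pole_norm hσ⟩

lemma poleS_mem {σ : ℝ} (hσ : σ = 1 ∨ σ = -1) : poleS n hσ ∈ Mset n σ := by
  show 0 < σ * pole n σ (Fin.last n)
  rw [pole_last]
  rcases hσ with h | h <;> rw [h] <;> norm_num

lemma isOpen_Mset (σ : ℝ) : IsOpen (Mset n σ) := by
  have : Mset n σ = (fun x : Sph n =>
      σ * (x : EuclideanSpace ℝ (Fin (n + 1))) (Fin.last n)) ⁻¹' (Ioi 0) := rfl
  rw [this]
  exact (continuous_const.mul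
    ((continuous_coord (Fin.last n)).comp continuous_subtype_val)).isOpen_preimage _ isOpen_Ioi

lemma Mset_ne_univ {σ : ℝ} (hσ : σ = 1 ∨ σ = -1) : Mset n σ ≠ univ := by
  have hσ' : -σ = 1 ∨ -σ = -1 := by rcases hσ with h | h <;> [right; left] <;> rw [h] <;> norm_num
  intro h
  have h1 : poleS n hσ' ∈ Mset n σ := h ▸ mem_univ _
  have h2 : (0 : ℝ) < σ * pole n (-σ) (Fin.last n) := h1
  rw [pole_last] at h2
  rcases hσ with h | h <;> rw [h] at h2 <;> norm_num at h2

lemma Mset_mem_iff {σ : ℝ} {x : Sph n} :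
    x ∈ Mset n σ ↔ 0 < σ * (x : EuclideanSpace ℝ (Fin (n + 1))) (Fin.last n) := Iff.rfl

lemma infDist_ge {σ : ℝ} (hσ : σ = 1 ∨ σ = -1) {p : Sph n} :
    σ * (p : EuclideanSpace ℝ (Fin (n + 1))) (Fin.last n) ≤ infDist p (Mset n σ)ᶜ := by
  set ℓ := Fin.last n
  have hσ' : -σ = 1 ∨ -σ = -1 := by rcases hσ with h | h <;> [right; left] <;> rw [h] <;> norm_num
  have hne : (Mset n σ)ᶜ.Nonempty := by
    refine ⟨poleS n hσ', ?_⟩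
    show ¬ (0 : ℝ) < σ * pole n (-σ) (Fin.last n)
    rw [pole_last]
    rcases hσ with h | h <;> rw [h] <;> norm_num
  by_contra hcon
  push_neg at hcon
  obtain ⟨z, hz, hdz⟩ := (infDist_lt_iff hne).mp hcon
  have hz' : σ * (z : EuclideanSpace ℝ (Fin (n + 1))) ℓ ≤ 0 := by
    have := hz
    simp only [mem_compl_iff, Mset_mem_iff, not_lt] at this
    exact this
  have hd : |(p : EuclideanSpace ℝ (Fin (n + 1))) ℓ - (z : EuclideanSpace ℝ (Fin (n + 1))) ℓ|
      ≤ dist p z := by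
    rw [Subtype.dist_eq]
    exact coord_abs_le_dist _ _ ℓ
  set pℓ := (p : EuclideanSpace ℝ (Fin (n + 1))) ℓ
  set zℓ := (z : EuclideanSpace ℝ (Fin (n + 1))) ℓ
  have habs : σ * pℓ - σ * zℓ ≤ |pℓ - zℓ| := by
    rcases hσ with h | h <;> rw [h]
    · simpa using le_abs_self (pℓ - zℓ)
    · rw [abs_sub_comm]
      have := le_abs_self (zℓ - pℓ)
      linarith
  linarith [hd, habs, hdz]

/-! ### variation helper -/

lemma evar_le {Y : Type*} [MetricSpace Y] {f : ℝ → Y} {u v L : ℝ} (hL : 0 ≤ L) (huv : u ≤ v)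
    (h : ∀ s ∈ Icc u v, ∀ t ∈ Icc u v, dist (f s) (f t) ≤ L * |s - t|) :
    eVariationOn f (Icc u v) ≤ ENNReal.ofReal (L * (v - u)) := by
  have hlip : LipschitzOnWith (Real.toNNReal L) f (Icc u v) := by
    rw [lipschitzOnWith_iff_dist_le_mul]
    intro x hx y hy
    have := h x hx y hy
    rwa [Real.coe_toNNReal _ hL, Real.dist_eq]
  have hid : eVariationOn (id : ℝ → ℝ) (Icc u v) ≤ ENNReal.ofReal (v - u) := by
    have := MonotoneOn.eVariationOn_le (f := (id : ℝ → ℝ)) (s := Icc u v)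
      (monotoneOn_id) (left_mem_Icc.2 huv) (right_mem_Icc.2 huv)
    simpa using this
  calc eVariationOn f (Icc u v) = eVariationOn (f ∘ id) (Icc u v) := rfl
    _ ≤ Real.toNNReal L * eVariationOn (id : ℝ → ℝ) (Icc u v) :=
        hlip.comp_eVariationOn_le (mapsTo_id _)
    _ ≤ Real.toNNReal L * ENNReal.ofReal (v - u) := by gcongr
    _ = ENNReal.ofReal (L * (v - u)) := by
        rw [ENNReal.ofReal_mul hL]
        congr 1

lemma key_ineq {φ ψ : ℝ} (hψ : 0 ≤ ψ) (hφ : φ ≤ π / 2) (hψφ : ψ ≤ φ) :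
    φ - ψ ≤ 2 * cos ψ := by
  have hπ : (0 : ℝ) < π := pi_pos
  have h2 : ψ ≤ π / 2 := hψφ.trans hφ
  have h := Real.one_sub_mul_le_cos hψ h2
  have hkey : π / 2 - ψ ≤ 2 * (1 - 2 / π * ψ) := by
    have he : 2 * (1 - 2 / π * ψ) - (π / 2 - ψ) = (4 - π) * (π - 2 * ψ) / (2 * π) := by
      field_simp
      ring
    have hp : 0 ≤ (4 - π) * (π - 2 * ψ) / (2 * π) := by
      apply div_nonneg _ (by linarith)
      apply mul_nonneg <;> linarith [Real.pi_lt_d2]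
    linarith
  linarith

/-! ### the John curve -/

lemma john_main {σ : ℝ} (hσ : σ = 1 ∨ σ = -1) {a b : Sph n}
    (ha : a ∈ Mset n σ) (hb : b ∈ Mset n σ) :
    ∃ γ : ℝ → Sph n,
      ContinuousOn γ (Icc 0 1) ∧ γ 0 = a ∧ γ 1 = b ∧
      MapsTo γ (Icc 0 1) (Mset n σ) ∧
      eVariationOn γ (Icc 0 1) ≠ ⊤ ∧
      ∀ t ∈ Icc (0 : ℝ) 1,
        min (eVariationOn γ (Icc 0 t)) (eVariationOn γ (Icc t 1)) ≤
          ENNReal.ofReal (2 * infDist (γ t) (Mset n σ)ᶜ) := by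
  set ℓ := Fin.last n with hℓ
  set A := (a : EuclideanSpace ℝ (Fin (n + 1))) with hA
  set B := (b : EuclideanSpace ℝ (Fin (n + 1))) with hB
  have hAn : ‖A‖ = 1 := mem_sphere_zero_iff_norm.mp a.2
  have hBn : ‖B‖ = 1 := mem_sphere_zero_iff_norm.mp b.2
  have hApos : 0 < σ * A ℓ := ha
  have hBpos : 0 < σ * B ℓ := hb
  set φa := ang σ A with hφa
  set φb := ang σ B with hφb
  have hφa0 : 0 ≤ φa := ang_nonneg
  have hφb0 : 0 ≤ φb := ang_nonneg
  have hφa2 : φa < π / 2 := ang_lt_pi_div_two hApos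
  have hφb2 : φb < π / 2 := ang_lt_pi_div_two hBpos
  set ga : ℝ → Sph n := fun s =>
    ⟨geo σ A s, by rw [mem_sphere_zero_iff_norm]; exact geo_norm hσ hAn hApos s⟩ with hga
  set gb : ℝ → Sph n := fun s =>
    ⟨geo σ B s, by rw [mem_sphere_zero_iff_norm]; exact geo_norm hσ hBn hBpos s⟩ with hgb
  have hga_dist : ∀ s t : ℝ, dist (ga s) (ga t) ≤ φa * |s - t| := fun s t => by
    rw [hga, Subtype.dist_eq]
    exact geo_dist hσ hAn hApos s t
  have hgb_dist : ∀ s t : ℝ, dist (gb s) (gb t) ≤ φb * |s - t| := fun s t => by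
    rw [hgb, Subtype.dist_eq]
    exact geo_dist hσ hBn hBpos s t
  have hg0 : ga 0 = gb 0 := by
    apply Subtype.ext
    show geo σ A 0 = geo σ B 0
    rw [geo_zero hσ, geo_zero hσ]
  set γ : ℝ → Sph n := fun t => if t ≤ 1 / 2 then ga (1 - 2 * t) else gb (2 * t - 1) with hγ
  have γ_left : ∀ t : ℝ, t ≤ 1 / 2 → γ t = ga (1 - 2 * t) := fun t ht => if_pos ht
  have γ_right : ∀ t : ℝ, 1 / 2 ≤ t → γ t = gb (2 * t - 1) := by
    intro t ht
    by_cases h : t ≤ 1 / 2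
    · have h12 : t = 1 / 2 := le_antisymm h ht
      rw [hγ]
      simp only [h12]
      norm_num
      exact hg0
    · exact if_neg h
  have γ0 : γ 0 = a := by
    rw [γ_left 0 (by norm_num)]
    norm_num
    apply Subtype.ext
    show geo σ A 1 = A
    exact geo_one hσ hAn hApos
  have γ1 : γ 1 = b := by
    rw [γ_right 1 (by norm_num)]
    norm_num
    apply Subtype.ext
    show geo σ B 1 = B
    exact geo_one hσ hBn hBpos
  -- distance bounds
  have dL : ∀ s ∈ Icc (0 : ℝ) (1 / 2), ∀ t ∈ Icc (0 : ℝ) (1 / 2),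
      dist (γ s) (γ t) ≤ (2 * φa) * |s - t| := by
    intro s hs t ht
    rw [γ_left s hs.2, γ_left t ht.2]
    calc dist (ga (1 - 2 * s)) (ga (1 - 2 * t)) ≤ φa * |(1 - 2 * s) - (1 - 2 * t)| :=
          hga_dist _ _
      _ = (2 * φa) * |s - t| := by
          have he : (1 - 2 * s) - (1 - 2 * t) = (-2) * (s - t) := by ring
          rw [he, abs_mul]
          norm_num
          ring
  have dR : ∀ s ∈ Icc (1 / 2 : ℝ) 1, ∀ t ∈ Icc (1 / 2 : ℝ) 1,
      dist (γ s) (γ t) ≤ (2 * φb) * |s - t| := by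
    intro s hs t ht
    rw [γ_right s hs.1, γ_right t ht.1]
    calc dist (gb (2 * s - 1)) (gb (2 * t - 1)) ≤ φb * |(2 * s - 1) - (2 * t - 1)| :=
          hgb_dist _ _
      _ = (2 * φb) * |s - t| := by
          have he : (2 * s - 1) - (2 * t - 1) = 2 * (s - t) := by ring
          rw [he, abs_mul]
          norm_num
          ring
  have dFull : ∀ s ∈ Icc (0 : ℝ) 1, ∀ t ∈ Icc (0 : ℝ) 1,
      dist (γ s) (γ t) ≤ π * |s - t| := by
    have main : ∀ s ∈ Icc (0 : ℝ) 1, ∀ t ∈ Icc (0 : ℝ) 1, s ≤ t →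
        dist (γ s) (γ t) ≤ π * |s - t| := by
      intro s hs t ht hst
      by_cases h1 : t ≤ 1 / 2
      · calc dist (γ s) (γ t) ≤ (2 * φa) * |s - t| :=
              dL s ⟨hs.1, hst.trans h1⟩ t ⟨(hs.1).trans hst, h1⟩
          _ ≤ π * |s - t| := by
              apply mul_le_mul_of_nonneg_right _ (abs_nonneg _)
              linarith
      · push_neg at h1
        by_cases h2 : 1 / 2 ≤ s
        · calc dist (γ s) (γ t) ≤ (2 * φb) * |s - t| :=
                dR s ⟨h2, hst.trans ht.2⟩ t ⟨h2.trans hst, ht.2⟩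
            _ ≤ π * |s - t| := by
                apply mul_le_mul_of_nonneg_right _ (abs_nonneg _)
                linarith
        · push_neg at h2
          have habs1 : |s - 1 / 2| = 1 / 2 - s := by rw [abs_sub_comm, abs_of_nonneg]; linarith
          have habs2 : |(1 : ℝ) / 2 - t| = t - 1 / 2 := by rw [abs_sub_comm, abs_of_nonneg]; linarith
          have habs3 : |s - t| = t - s := by rw [abs_sub_comm, abs_of_nonneg]; linarith
          calc dist (γ s) (γ t) ≤ dist (γ s) (γ (1 / 2)) + dist (γ (1 / 2)) (γ t) :=
                dist_triangle _ _ _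
            _ ≤ (2 * φa) * |s - 1 / 2| + (2 * φb) * |(1 : ℝ) / 2 - t| := by
                apply add_le_add
                · exact dL s ⟨hs.1, h2.le⟩ (1 / 2) ⟨by norm_num, le_refl _⟩
                · exact dR (1 / 2) ⟨le_refl _, by norm_num⟩ t ⟨h1.le, ht.2⟩
            _ ≤ π * |s - t| := by
                rw [habs1, habs2, habs3]
                nlinarith [Real.pi_pos]
    intro s hs t ht
    rcases le_total s t with h | h
    · exact main s hs t ht h
    · rw [dist_comm, abs_sub_comm]
      exact main t ht s hs h
  have hcont : ContinuousOn γ (Icc 0 1) := by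
    have : LipschitzOnWith (Real.toNNReal π) γ (Icc 0 1) := by
      rw [lipschitzOnWith_iff_dist_le_mul]
      intro x hx y hy
      have := dFull x hx y hy
      rwa [Real.coe_toNNReal _ Real.pi_pos.le, Real.dist_eq]
    exact this.continuousOn
  have hmaps : MapsTo γ (Icc 0 1) (Mset n σ) := by
    intro t ht
    by_cases h : t ≤ 1 / 2
    · rw [γ_left t h, Mset_mem_iff]
      show 0 < σ * geo σ A (1 - 2 * t) ℓ
      rw [geo_last]
      have he : σ * (σ * cos ((1 - 2 * t) * φa)) = cos ((1 - 2 * t) * φa) := by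
        linear_combination cos ((1 - 2 * t) * φa) * sq_one hσ
      rw [he]
      apply Real.cos_pos_of_mem_Ioo
      constructor
      · have h1 : 0 ≤ (1 - 2 * t) * φa := mul_nonneg (by linarith) hφa0
        linarith [Real.pi_pos]
      · have h1 : (1 - 2 * t) * φa ≤ 1 * φa :=
          mul_le_mul_of_nonneg_right (by linarith [ht.1]) hφa0
        rw [one_mul] at h1
        linarith
    · push_neg at h
      rw [γ_right t h.le, Mset_mem_iff]
      show 0 < σ * geo σ B (2 * t - 1) ℓ
      rw [geo_last]
      have he : σ * (σ * cos ((2 * t - 1) * φb)) = cos ((2 * t - 1) * φb) := by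
        linear_combination cos ((2 * t - 1) * φb) * sq_one hσ
      rw [he]
      apply Real.cos_pos_of_mem_Ioo
      constructor
      · have h1 : 0 ≤ (2 * t - 1) * φb := mul_nonneg (by linarith) hφb0
        linarith [Real.pi_pos]
      · have h1 : (2 * t - 1) * φb ≤ 1 * φb :=
          mul_le_mul_of_nonneg_right (by linarith [ht.2]) hφb0
        rw [one_mul] at h1
        linarith
  have hfin : eVariationOn γ (Icc 0 1) ≠ ⊤ := by
    have := evar_le (f := γ) (u := 0) (v := 1) Real.pi_pos.le (by norm_num) dFull
    exact ne_top_of_le_ne_top (by simp) this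
  refine ⟨γ, hcont, γ0, γ1, hmaps, hfin, ?_⟩
  intro t ht
  by_cases h : t ≤ 1 / 2
  · -- use the left piece
    have hev : eVariationOn γ (Icc 0 t) ≤ ENNReal.ofReal ((2 * φa) * (t - 0)) := by
      apply evar_le (by linarith) ht.1
      intro s hs s' hs'
      exact dL s ⟨hs.1, hs.2.trans h⟩ s' ⟨hs'.1, hs'.2.trans h⟩
    set ψ := (1 - 2 * t) * φa with hψ
    have hψ0 : 0 ≤ ψ := mul_nonneg (by linarith) hφa0
    have hψφ : ψ ≤ φa := by
      have h1 : (1 - 2 * t) * φa ≤ 1 * φa :=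
        mul_le_mul_of_nonneg_right (by linarith [ht.1]) hφa0
      rw [one_mul] at h1
      exact h1
    have hkey : (2 * φa) * (t - 0) ≤ 2 * cos ψ := by
      have := key_ineq hψ0 hφa2.le hψφ
      have he : φa - ψ = (2 * φa) * (t - 0) := by rw [hψ]; ring
      linarith
    have hlast : cos ψ = σ * (γ t : EuclideanSpace ℝ (Fin (n + 1))) ℓ := by
      rw [γ_left t h]
      show cos ψ = σ * geo σ A (1 - 2 * t) ℓ
      rw [geo_last, ← hψ]
      linear_combination (- cos ψ) * sq_one hσ
    have hinf : cos ψ ≤ infDist (γ t) (Mset n σ)ᶜ := by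
      rw [hlast]
      exact infDist_ge hσ
    refine le_trans (min_le_left _ _) (le_trans hev (ENNReal.ofReal_le_ofReal ?_))
    linarith
  · push_neg at h
    have hev : eVariationOn γ (Icc t 1) ≤ ENNReal.ofReal ((2 * φb) * (1 - t)) := by
      apply evar_le (by linarith) ht.2
      intro s hs s' hs'
      exact dR s ⟨h.le.trans hs.1, hs.2⟩ s' ⟨h.le.trans hs'.1, hs'.2⟩
    set ψ := (2 * t - 1) * φb with hψ
    have hψ0 : 0 ≤ ψ := mul_nonneg (by linarith) hφb0
    have hψφ : ψ ≤ φb := by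
      have h1 : (2 * t - 1) * φb ≤ 1 * φb :=
        mul_le_mul_of_nonneg_right (by linarith [ht.2]) hφb0
      rw [one_mul] at h1
      exact h1
    have hkey : (2 * φb) * (1 - t) ≤ 2 * cos ψ := by
      have := key_ineq hψ0 hφb2.le hψφ
      have he : φb - ψ = (2 * φb) * (1 - t) := by rw [hψ]; ring
      linarith
    have hlast : cos ψ = σ * (γ t : EuclideanSpace ℝ (Fin (n + 1))) ℓ := by
      rw [γ_right t h.le]
      show cos ψ = σ * geo σ B (2 * t - 1) ℓ
      rw [geo_last, ← hψ]
      linear_combination (- cos ψ) * sq_one hσ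
    have hinf : cos ψ ≤ infDist (γ t) (Mset n σ)ᶜ := by
      rw [hlast]
      exact infDist_ge hσ
    refine le_trans (min_le_right _ _) (le_trans hev (ENNReal.ofReal_le_ofReal ?_))
    linarith

lemma isPathConnected_Mset {σ : ℝ} (hσ : σ = 1 ∨ σ = -1) : IsPathConnected (Mset n σ) := by
  refine ⟨poleS n hσ, poleS_mem hσ, ?_⟩
  intro y hy
  obtain ⟨γ, hcont, h0, h1, hmaps, -, -⟩ := john_main hσ (poleS_mem hσ) hy
  have hγc : Continuous fun t : unitInterval => γ t :=
    hcont.comp_continuous continuous_subtype_val fun t => t.2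
  exact ⟨⟨⟨fun t => γ t, hγc⟩, h0, h1⟩, fun t => hmaps t.2⟩

lemma isConnected_Mset {σ : ℝ} (hσ : σ = 1 ∨ σ = -1) : IsConnected (Mset n σ) :=
  (isPathConnected_Mset hσ).isConnected

lemma isJohnDomain_Mset {σ : ℝ} (hσ : σ = 1 ∨ σ = -1) :
    IsOpen (Mset n σ) ∧ IsConnected (Mset n σ) ∧ Mset n σ ≠ univ ∧
    ∀ a ∈ Mset n σ, ∀ b ∈ Mset n σ, ∃ γ : ℝ → Sph n,
      ContinuousOn γ (Icc 0 1) ∧ γ 0 = a ∧ γ 1 = b ∧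
      MapsTo γ (Icc 0 1) (Mset n σ) ∧
      eVariationOn γ (Icc 0 1) ≠ ⊤ ∧
      ∀ t ∈ Icc (0 : ℝ) 1,
        min (eVariationOn γ (Icc 0 t)) (eVariationOn γ (Icc t 1)) ≤
          ENNReal.ofReal (2 * infDist (γ t) (Mset n σ)ᶜ) :=
  ⟨isOpen_Mset σ, isConnected_Mset hσ, Mset_ne_univ hσ,
    fun _ ha _ hb => john_main hσ ha hb⟩

lemma eucl_ext {m : ℕ} {x y : EuclideanSpace ℝ (Fin m)} (h : ∀ i, x i = y i) : x = y :=
  PiLp.ext h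

/-! ### homeomorphism with the ball -/

noncomputable def toBall {σ : ℝ} (x : ↥(Mset n σ)) : ↥(ball (0 : EuclideanSpace ℝ (Fin n)) 1) := by
  refine ⟨mk fun i => ((x : Sph n) : EuclideanSpace ℝ (Fin (n + 1))) i.castSucc, ?_⟩
  set v := ((x : Sph n) : EuclideanSpace ℝ (Fin (n + 1))) with hv
  have hvn : ‖v‖ = 1 := mem_sphere_zero_iff_norm.mp (x : Sph n).2
  have hpos : 0 < σ * v (Fin.last n) := x.2
  have hvl : v (Fin.last n) ≠ 0 := by
    intro h0
    rw [h0, mul_zero] at hpos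
    exact lt_irrefl _ hpos
  rw [mem_ball_zero_iff]
  have hsq : ‖mk fun i => v i.castSucc‖ ^ 2 = 1 - v (Fin.last n) ^ 2 := by
    rw [normsq]
    simp only [mk_apply]
    exact sum_castSucc_sq hvn
  have h1 : ‖mk fun i => v i.castSucc‖ ^ 2 < 1 := by
    have h2 : v (Fin.last n) ^ 2 ≠ 0 := pow_ne_zero 2 hvl
    have h3 : 0 < v (Fin.last n) ^ 2 := lt_of_le_of_ne (sq_nonneg _) (Ne.symm h2)
    linarith
  nlinarith [norm_nonneg (mk fun i => v i.castSucc)]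

noncomputable def fromBall (n : ℕ) (σ : ℝ) (hσ : σ = 1 ∨ σ = -1)
    (y : ↥(ball (0 : EuclideanSpace ℝ (Fin n)) 1)) : ↥(Mset n σ) := by
  set w := (y : EuclideanSpace ℝ (Fin n)) with hw
  have hwn : ‖w‖ < 1 := mem_ball_zero_iff.mp y.2
  have hw1 : 1 - ‖w‖ ^ 2 > 0 := by nlinarith [norm_nonneg w]
  refine ⟨⟨mk (Fin.snoc (fun i => w i) (σ * Real.sqrt (1 - ‖w‖ ^ 2))), ?_⟩, ?_⟩
  · rw [mem_sphere_zero_iff_norm]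
    apply norm_eq_one_of_sq
    rw [Fin.sum_univ_castSucc]
    simp only [mk_apply, Fin.snoc_castSucc, Fin.snoc_last]
    rw [mul_pow, sq_one hσ, one_mul, Real.sq_sqrt hw1.le, ← normsq]
    ring
  · rw [Mset_mem_iff]
    show 0 < σ * mk (Fin.snoc (fun i => w i) (σ * Real.sqrt (1 - ‖w‖ ^ 2))) (Fin.last n)
    simp only [mk_apply, Fin.snoc_last]
    have he : σ * (σ * Real.sqrt (1 - ‖w‖ ^ 2)) = Real.sqrt (1 - ‖w‖ ^ 2) := by
      linear_combination Real.sqrt (1 - ‖w‖ ^ 2) * sq_one hσ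
    rw [he]
    exact Real.sqrt_pos.mpr hw1

noncomputable def MsetHomeo (n : ℕ) (σ : ℝ) (hσ : σ = 1 ∨ σ = -1) :
    ↥(Mset n σ) ≃ₜ ↥(ball (0 : EuclideanSpace ℝ (Fin n)) 1) where
  toFun := toBall
  invFun := fromBall n σ hσ
  left_inv := by
    intro x
    apply Subtype.ext
    apply Subtype.ext
    show mk (Fin.snoc _ _) = _
    set v := ((x : Sph n) : EuclideanSpace ℝ (Fin (n + 1))) with hv
    have hvn : ‖v‖ = 1 := mem_sphere_zero_iff_norm.mp (x : Sph n).2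
    have hpos : 0 < σ * v (Fin.last n) := x.2
    apply eucl_ext
    intro i
    refine Fin.lastCases ?_ (fun j => ?_) i
    · simp only [mk_apply, Fin.snoc_last]
      have hsq : ‖(toBall x : EuclideanSpace ℝ (Fin n))‖ ^ 2 = 1 - v (Fin.last n) ^ 2 := by
        show ‖mk fun i => v i.castSucc‖ ^ 2 = _
        rw [normsq]
        simp only [mk_apply]
        exact sum_castSucc_sq hvn
      rw [hsq]
      have h1 : (1 : ℝ) - (1 - v (Fin.last n) ^ 2) = v (Fin.last n) ^ 2 := by ring
      rw [h1, Real.sqrt_sq_eq_abs]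
      have habs : |v (Fin.last n)| = σ * v (Fin.last n) := by
        rcases hσ with h | h <;> rw [h] at hpos ⊢
        · rw [one_mul]
          exact abs_of_pos (by linarith)
        · rw [abs_of_neg (by linarith)]
          ring
      rw [habs]
      linear_combination v (Fin.last n) * sq_one hσ
    · simp only [mk_apply, Fin.snoc_castSucc]
      rfl
  right_inv := by
    intro y
    apply Subtype.ext
    have hcoe : ((fromBall n σ hσ y : Sph n) : EuclideanSpace ℝ (Fin (n + 1)))
        = mk (Fin.snoc (fun i => (y : EuclideanSpace ℝ (Fin n)) i)
          (σ * Real.sqrt (1 - ‖(y : EuclideanSpace ℝ (Fin n))‖ ^ 2))) := rfl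
    show mk (fun i => ((fromBall n σ hσ y : Sph n) : EuclideanSpace ℝ (Fin (n + 1))) i.castSucc)
        = (y : EuclideanSpace ℝ (Fin n))
    apply eucl_ext
    intro i
    rw [mk_apply, hcoe, mk_apply, Fin.snoc_castSucc]
  continuous_toFun := by
    apply Continuous.subtype_mk
    exact continuous_mk.comp (continuous_pi fun i =>
      (continuous_coord i.castSucc).comp (continuous_subtype_val.comp continuous_subtype_val))
  continuous_invFun := by
    apply Continuous.subtype_mk
    apply Continuous.subtype_mk
    apply continuous_mk.comp
    apply continuous_pi
    intro i
    refine Fin.lastCases ?_ (fun j => ?_) i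
    · simp only [Fin.snoc_last]
      apply continuous_const.mul
      apply Real.continuous_sqrt.comp
      exact continuous_const.sub ((continuous_norm.comp continuous_subtype_val).pow 2)
    · simp only [Fin.snoc_castSucc]
      exact (continuous_coord j).comp continuous_subtype_val

/-! ### frontier -/

lemma closure_Mset_subset {σ : ℝ} :
    closure (Mset n σ) ⊆ {x : Sph n | 0 ≤ σ * (x : EuclideanSpace ℝ (Fin (n + 1))) (Fin.last n)} := by
  have hcl : IsClosed {x : Sph n | 0 ≤ σ * (x : EuclideanSpace ℝ (Fin (n + 1))) (Fin.last n)} := by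
    have he : {x : Sph n | 0 ≤ σ * (x : EuclideanSpace ℝ (Fin (n + 1))) (Fin.last n)}
        = (fun x : Sph n => σ * (x : EuclideanSpace ℝ (Fin (n + 1))) (Fin.last n)) ⁻¹' (Ici 0) := rfl
    rw [he]
    exact isClosed_Ici.preimage (continuous_const.mul
      ((continuous_coord (Fin.last n)).comp continuous_subtype_val))
  exact closure_minimal (fun x hx => le_of_lt (show (0:ℝ) < σ * (x : EuclideanSpace ℝ (Fin (n + 1))) (Fin.last n) from hx)) hcl

lemma Xset_subset_closure_Mset {σ : ℝ} (hσ : σ = 1 ∨ σ = -1) :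
    Xset n ⊆ closure (Mset n σ) := by
  intro e he
  have hel : (e : EuclideanSpace ℝ (Fin (n + 1))) (Fin.last n) = 0 := he
  have hen : ‖(e : EuclideanSpace ℝ (Fin (n + 1)))‖ = 1 := mem_sphere_zero_iff_norm.mp e.2
  have hqn : ∀ ε : ℝ, ‖mk (Fin.snoc
      (fun i => cos ε * (e : EuclideanSpace ℝ (Fin (n + 1))) i.castSucc) (σ * sin ε))‖ = 1 := by
    intro ε
    apply norm_eq_one_of_sq
    rw [Fin.sum_univ_castSucc]
    simp only [mk_apply, Fin.snoc_castSucc, Fin.snoc_last]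
    have e1 : ∀ i : Fin n, (cos ε * (e : EuclideanSpace ℝ (Fin (n + 1))) i.castSucc) ^ 2
        = cos ε ^ 2 * (e : EuclideanSpace ℝ (Fin (n + 1))) i.castSucc ^ 2 := fun i => by ring
    simp_rw [e1]
    rw [← Finset.mul_sum, sum_castSucc_sq hen, hel]
    have := Real.sin_sq_add_cos_sq ε
    have hs := sq_one hσ
    nlinarith
  set q : ℝ → Sph n := fun ε => ⟨mk (Fin.snoc
      (fun i => cos ε * (e : EuclideanSpace ℝ (Fin (n + 1))) i.castSucc) (σ * sin ε)),
      by rw [mem_sphere_zero_iff_norm]; exact hqn ε⟩ with hq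
  have hq0 : q 0 = e := by
    apply Subtype.ext
    apply eucl_ext
    intro i
    refine Fin.lastCases ?_ (fun j => ?_) i
    · show mk _ (Fin.last n) = _
      simp only [mk_apply, Fin.snoc_last, Real.sin_zero, mul_zero]
      exact hel.symm
    · show mk _ (j.castSucc) = _
      simp only [mk_apply, Fin.snoc_castSucc, Real.cos_zero, one_mul]
  have hqc : Continuous q := by
    apply Continuous.subtype_mk
    apply continuous_mk.comp
    apply continuous_pi
    intro i
    refine Fin.lastCases ?_ (fun j => ?_) i
    · simp only [Fin.snoc_last]
      exact continuous_const.mul Real.continuous_sin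
    · simp only [Fin.snoc_castSucc]
      exact Real.continuous_cos.mul continuous_const
  have hmem : ∀ ε ∈ Ioo (0 : ℝ) 1, q ε ∈ Mset n σ := by
    intro ε hε
    rw [Mset_mem_iff]
    show 0 < σ * mk _ (Fin.last n)
    simp only [mk_apply, Fin.snoc_last]
    have he2 : σ * (σ * sin ε) = sin ε := by linear_combination sin ε * sq_one hσ
    rw [he2]
    exact Real.sin_pos_of_pos_of_lt_pi hε.1 (by linarith [Real.pi_gt_three, hε.2])
  have htend : Filter.Tendsto q (nhdsWithin 0 (Ioi 0)) (nhds e) := by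
    rw [← hq0]
    exact (hqc.tendsto 0).mono_left nhdsWithin_le_nhds
  exact mem_closure_of_tendsto htend
    (Filter.eventually_of_mem (Ioo_mem_nhdsGT_of_mem ⟨le_refl 0, zero_lt_one⟩) hmem)

lemma frontier_Mset {σ : ℝ} (hσ : σ = 1 ∨ σ = -1) : frontier (Mset n σ) = Xset n := by
  rw [(isOpen_Mset (n := n) σ).frontier_eq]
  apply Subset.antisymm
  · rintro x ⟨hxc, hxm⟩
    have h1 : 0 ≤ σ * (x : EuclideanSpace ℝ (Fin (n + 1))) (Fin.last n) := closure_Mset_subset hxc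
    have h2 : ¬ 0 < σ * (x : EuclideanSpace ℝ (Fin (n + 1))) (Fin.last n) := hxm
    have h3 : σ * (x : EuclideanSpace ℝ (Fin (n + 1))) (Fin.last n) = 0 := by
      by_contra h
      exact h2 (lt_of_le_of_ne h1 (Ne.symm h))
    show (x : EuclideanSpace ℝ (Fin (n + 1))) (Fin.last n) = 0
    rcases hσ with h | h <;> rw [h] at h3 <;> linarith
  · intro x hx
    have hxl : (x : EuclideanSpace ℝ (Fin (n + 1))) (Fin.last n) = 0 := hx
    refine ⟨Xset_subset_closure_Mset hσ hx, ?_⟩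
    show ¬ 0 < σ * (x : EuclideanSpace ℝ (Fin (n + 1))) (Fin.last n)
    rw [hxl, mul_zero]
    exact lt_irrefl 0

/-! ### the equator -/

lemma compl_Xset : (Xset n)ᶜ = Mset n 1 ∪ Mset n (-1) := by
  ext x
  simp only [mem_compl_iff, mem_union, Xset, Mset, mem_setOf_eq]
  constructor
  · intro h
    rcases lt_or_gt_of_ne h with h1 | h1
    · right; linarith
    · left; linarith
  · rintro (h | h) h0 <;> rw [h0] at h <;> norm_num at h

lemma disjoint_Mset : Disjoint (Mset n 1) (Mset n (-1)) := by
  rw [Set.disjoint_left]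
  intro x h1 h2
  have ha : (0 : ℝ) < 1 * (x : EuclideanSpace ℝ (Fin (n + 1))) (Fin.last n) := h1
  have hb : (0 : ℝ) < -1 * (x : EuclideanSpace ℝ (Fin (n + 1))) (Fin.last n) := h2
  linarith

lemma isClosed_Xset : IsClosed (Xset n) :=
  isClosed_eq ((continuous_coord (Fin.last n)).comp continuous_subtype_val) continuous_const

lemma isCompact_Xset : IsCompact (Xset n) := isClosed_Xset.isCompact

lemma isConnected_Xset (hn : 1 < n) : IsConnected (Xset n) := by
  have hqn : ∀ y : ↥(sphere (0 : EuclideanSpace ℝ (Fin n)) 1),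
      ‖mk (Fin.snoc (fun i => (y : EuclideanSpace ℝ (Fin n)) i) (0 : ℝ))‖ = 1 := by
    intro y
    apply norm_eq_one_of_sq
    rw [Fin.sum_univ_castSucc]
    simp only [mk_apply, Fin.snoc_castSucc, Fin.snoc_last]
    have hyn : ‖(y : EuclideanSpace ℝ (Fin n))‖ = 1 := mem_sphere_zero_iff_norm.mp y.2
    have := normsq (y : EuclideanSpace ℝ (Fin n))
    rw [hyn] at this
    nlinarith
  set emb : ↥(sphere (0 : EuclideanSpace ℝ (Fin n)) 1) → Sph n := fun y =>
    ⟨mk (Fin.snoc (fun i => (y : EuclideanSpace ℝ (Fin n)) i) 0),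
      by rw [mem_sphere_zero_iff_norm]; exact hqn y⟩ with hemb
  have hembc : Continuous emb := by
    apply Continuous.subtype_mk
    apply continuous_mk.comp
    apply continuous_pi
    intro i
    refine Fin.lastCases ?_ (fun j => ?_) i
    · simp only [Fin.snoc_last]
      exact continuous_const
    · simp only [Fin.snoc_castSucc]
      exact (continuous_coord j).comp continuous_subtype_val
  have hrange : Xset n = Set.range emb := by
    apply Subset.antisymm
    · intro x hx
      have hxl : (x : EuclideanSpace ℝ (Fin (n + 1))) (Fin.last n) = 0 := hx
      have hxn : ‖(x : EuclideanSpace ℝ (Fin (n + 1)))‖ = 1 := mem_sphere_zero_iff_norm.mp x.2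
      have hyn : ‖mk (fun i => (x : EuclideanSpace ℝ (Fin (n + 1))) i.castSucc)‖ = 1 := by
        apply norm_eq_one_of_sq
        simp only [mk_apply]
        rw [sum_castSucc_sq hxn, hxl]
        norm_num
      refine ⟨⟨mk (fun i => (x : EuclideanSpace ℝ (Fin (n + 1))) i.castSucc),
        by rw [mem_sphere_zero_iff_norm]; exact hyn⟩, ?_⟩
      apply Subtype.ext
      apply eucl_ext
      intro i
      refine Fin.lastCases ?_ (fun j => ?_) i
      · show mk _ (Fin.last n) = _
        simp only [mk_apply, Fin.snoc_last]
        exact hxl.symm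
      · show mk _ (j.castSucc) = _
        simp only [mk_apply, Fin.snoc_castSucc]
    · rintro x ⟨y, rfl⟩
      show mk _ (Fin.last n) = 0
      simp only [mk_apply, Fin.snoc_last]
  have hrank : 1 < Module.rank ℝ (EuclideanSpace ℝ (Fin n)) := by
    rw [← Module.finrank_eq_rank, finrank_euclideanSpace_fin]
    exact_mod_cast hn
  have hconn : ConnectedSpace ↥(sphere (0 : EuclideanSpace ℝ (Fin n)) 1) :=
    Subtype.connectedSpace (isConnected_sphere hrank 0 zero_le_one)
  rw [hrange]
  exact isConnected_range hembc

lemma Xset_nonempty (hn : 1 < n) : (Xset n).Nonempty := (isConnected_Xset hn).nonempty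

end CB


/-- The two-component case: for `n ≥ 3` there is a continuum `X ⊆ Sⁿ` which is the
common boundary of exactly two disjoint open connected complementary components, each
homeomorphic to the open unit ball of `ℝⁿ` and each a `C`-John domain in `Sⁿ`. -/
theorem common_boundary_two_components_on_sphere (n : ℕ) (hn : 3 ≤ n) :
    ∃ C : ℝ, 1 ≤ C ∧
      ∃ (X M₁ M₂ : Set ↥(sphere (0 : EuclideanSpace ℝ (Fin (n + 1))) 1)),
        X.Nonempty ∧ IsCompact X ∧ IsConnected X ∧
        Disjoint M₁ M₂ ∧
        M₁.Nonempty ∧ M₂.Nonempty ∧ IsOpen M₁ ∧ IsOpen M₂ ∧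
        IsConnected M₁ ∧ IsConnected M₂ ∧
        Xᶜ = M₁ ∪ M₂ ∧
        frontier M₁ = X ∧ frontier M₂ = X ∧
        Nonempty (↥M₁ ≃ₜ ↥(ball (0 : EuclideanSpace ℝ (Fin n)) 1)) ∧
        Nonempty (↥M₂ ≃ₜ ↥(ball (0 : EuclideanSpace ℝ (Fin n)) 1)) ∧
        IsJohnDomain C M₁ ∧ IsJohnDomain C M₂ := by
  have hσ1 : (1 : ℝ) = 1 ∨ (1 : ℝ) = -1 := Or.inl rfl
  have hσ2 : (-1 : ℝ) = 1 ∨ (-1 : ℝ) = -1 := Or.inr rfl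
  have hn1 : 1 < n := by omega
  refine ⟨2, by norm_num, CB.Xset n, CB.Mset n 1, CB.Mset n (-1),
    CB.Xset_nonempty hn1, CB.isCompact_Xset, CB.isConnected_Xset hn1,
    CB.disjoint_Mset,
    ⟨CB.poleS n hσ1, CB.poleS_mem hσ1⟩, ⟨CB.poleS n hσ2, CB.poleS_mem hσ2⟩,
    CB.isOpen_Mset 1, CB.isOpen_Mset (-1),
    CB.isConnected_Mset hσ1, CB.isConnected_Mset hσ2,
    CB.compl_Xset,
    CB.frontier_Mset hσ1, CB.frontier_Mset hσ2,
    ⟨CB.MsetHomeo n 1 hσ1⟩, ⟨CB.MsetHomeo n (-1) hσ2⟩,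
    CB.isJohnDomain_Mset hσ1, CB.isJohnDomain_Mset hσ2⟩
end

section
/- Let (E, d) be a metric space, let A, Q, Q' ⊆ E, and let s > 0. Assume that d(q, q') ≥ s for every q ∈ Q and q' ∈ Q', and that infDist(p', A) ≤ s for every p' ∈ Q'. Then there is no point x ∈ E for which simultaneously there exists p ∈ Q with d(x, p) ≤ infDist(p, A)/4 and there exists p' ∈ Q' with d(x, p') ≤ infDist(p', A)/4. In other words, the wedge of Q and the wedge of Q' (relative to A) are disjoint. -/
open Set Metric

/-!
If `x` lies in the wedges of `p` and of `p'` and `infDist p' A ≤ d(p, p') =: d`, then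
`infDist p A ≤ infDist p' A + d ≤ 2d` because `infDist · A` is 1-Lipschitz, so the triangle
inequality through `x` gives `d ≤ (2d + d) / 4`, forcing `p = p'`. Separation of `Q` and `Q'`
by `s > 0` rules this out.
-/

section

variable {E : Type*} [MetricSpace E]

def wedge (A P : Set E) : Set E :=
  {x | ∃ p ∈ P, dist x p ≤ infDist p A / 4}

theorem eq_of_dist_le_infDist_div_four {A : Set E} {x p p' : E}
    (hxp : dist x p ≤ infDist p A / 4) (hxp' : dist x p' ≤ infDist p' A / 4)
    (hp' : infDist p' A ≤ dist p p') : p = p' := by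
  have hp : infDist p A ≤ 2 * dist p p' := by
    linarith [infDist_le_infDist_add_dist (s := A) (x := p) (y := p')]
  have htri : dist p p' ≤ dist x p + dist x p' := dist_triangle_left p p' x
  exact dist_le_zero.1 (by linarith)

theorem disjoint_wedge {A Q Q' : Set E} {s : ℝ} (hs : 0 < s)
    (hsep : ∀ q ∈ Q, ∀ q' ∈ Q', s ≤ dist q q') (hA : ∀ p' ∈ Q', infDist p' A ≤ s) :
    Disjoint (wedge A Q) (wedge A Q') := by
  rw [Set.disjoint_left]
  rintro x ⟨p, hp, hxp⟩ ⟨p', hp', hxp'⟩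
  have hpp' : s ≤ dist p p' := hsep p hp p' hp'
  have hne : p ≠ p' := dist_pos.1 (hs.trans_le hpp')
  exact hne (eq_of_dist_le_infDist_div_four hxp hxp' ((hA p' hp').trans hpp'))

end

/-- Disjointness of wedges: if every point of `Q'` is within distance `s` of `A`
and `Q` and `Q'` are at mutual distance at least `s`, then no point can lie
simultaneously in the wedge of `Q` and in the wedge of `Q'` relative to `A`. -/
theorem wedges_disjoint {E : Type*} [MetricSpace E] (A Q Q' : Set E) (s : ℝ)
    (hs : 0 < s)
    (hsep : ∀ q ∈ Q, ∀ q' ∈ Q', s ≤ dist q q')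
    (hA : ∀ p' ∈ Q', infDist p' A ≤ s) :
    ¬ ∃ x : E,
        (∃ p ∈ Q, dist x p ≤ infDist p A / 4) ∧
        (∃ p' ∈ Q', dist x p' ≤ infDist p' A / 4) := by
  rintro ⟨x, hxQ, hxQ'⟩
  exact Set.disjoint_left.1 (disjoint_wedge hs hsep hA) hxQ hxQ'
end
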